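/- arXiv:2309.11624 — 2 statements merged into one kernel-verified Lean document; each statement's English description precedes it below -/
import Mathlib

section
/- Let A = kQ/I be a bound quiver algebra with set of maximal paths M. Then M equals the union over all weakly connected components N of G_{Q,I} of the images f_N(M_N), where M_N is the set of maximal paths of A_N = kQ_N/I_N and f_N(m + I_N) = m + I. -/
namespace UMPPaper

variable {V A : Type}

/-- A (non-trivial) path in the quiver with source/target maps `s`, `t`,
represented as a nonempty list of composable arrows. -/
def IsPath (s t : A → V) (p : List A) : Prop :=
  p ≠ [] ∧ p.Chain' (fun a b => t a = s b)

/-- `Q` is a cyclic quiver: there is a repetition-free path through all arrows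
(and all vertices) whose target equals its source. -/
def IsCyclicQuiver (s t : A → V) : Prop :=
  ∃ p : List A, IsPath s t p ∧ p.Nodup ∧ (∀ a : A, a ∈ p) ∧
    (∀ v : V, ∃ a ∈ p, s a = v ∨ t a = v) ∧
    (∃ x ∈ p.getLast?, ∃ y ∈ p.head?, t x = s y)

/-- `Φ_a`: paths containing the arrow `a` as a subpath, all of whose
intermediate vertices have exactly one incoming and exactly one outgoing arrow. -/
def Phi (s t : A → V) (a : A) : Set (List A) :=
  {p | IsPath s t p ∧ [a] <:+: p ∧
    ∀ x ∈ p.dropLast, (∃! b : A, s b = t x) ∧ (∃! b : A, t b = t x)}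

/-- Specification of the assignment `a ↦ ω_a`. -/
def OmegaSpec (s t : A → V) (ω : A → List A) : Prop :=
  (IsCyclicQuiver s t → ∃ p : List A, IsPath s t p ∧ p.Nodup ∧ (∀ a : A, a ∈ p) ∧
      (∃ x ∈ p.getLast?, ∃ y ∈ p.head?, t x = s y) ∧ ∀ a : A, ω a = p) ∧
  (¬ IsCyclicQuiver s t →
    ∀ a : A, ω a ∈ Phi s t a ∧ ∀ q ∈ Phi s t a, q.length ≤ (ω a).length)

/-- The quiver is connected (as an undirected graph on vertices). -/
def QConnected (s t : A → V) : Prop :=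
  ∀ u v : V, Relation.ReflTransGen
    (fun x y => ∃ a : A, (s a = x ∧ t a = y) ∨ (s a = y ∧ t a = x)) u v

/-! ## Bound quiver algebras: the ideal `I` is abstracted by the set `Zi` of paths lying in it. -/

/-- The set of paths lying in a (two-sided) ideal is closed under taking super-paths. -/
def ZeroClosed (Zi : List A → Prop) : Prop :=
  ∀ p q : List A, Zi p → p <:+: q → Zi q

/-- Path-level content of admissibility: `I ⊆ R², Rᵐ ⊆ I` for some `m ≥ 2`. -/
def Admissible (s t : A → V) (Zi : List A → Prop) : Prop :=
  (∀ p : List A, Zi p → 2 ≤ p.length) ∧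
  ∃ m : ℕ, 2 ≤ m ∧ ∀ p : List A, IsPath s t p → m ≤ p.length → Zi p

/-- `t(p) = s(q)` and the junction (last arrow of `p`)·(first arrow of `q`) is not in `I`. -/
def JunctionOK (s t : A → V) (Zi : List A → Prop) (p q : List A) : Prop :=
  ∃ x ∈ p.getLast?, ∃ y ∈ q.head?, t x = s y ∧ ¬ Zi [x, y]

/-- Directed edge of the ramifications graph, on path-vertices. -/
def REdgeP (s t : A → V) (Zi : List A → Prop) (p q : List A) : Prop :=
  p ≠ q ∧ JunctionOK s t Zi p q

/-- Directed edge `ω_a → ω_b` of the ramifications graph `G_{Q,I}`. -/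
def REdge (s t : A → V) (Zi : List A → Prop) (ω : A → List A) (a b : A) : Prop :=
  REdgeP s t Zi (ω a) (ω b)

/-- Undirected adjacency (including equality of vertices) used for weak connectivity. -/
def RAdj (s t : A → V) (Zi : List A → Prop) (ω : A → List A) (a b : A) : Prop :=
  ω a = ω b ∨ REdge s t Zi ω a b ∨ REdge s t Zi ω b a

/-- `a` and `b` lie in the same weakly connected component of `G_{Q,I}`. -/
def SameComp (s t : A → V) (Zi : List A → Prop) (ω : A → List A) (a b : A) : Prop :=
  Relation.ReflTransGen (RAdj s t Zi ω) a b

/-- `N` (a set of arrows) is (the arrow set `(Q_N)₁` of) a weakly connected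
component of the ramifications graph `G_{Q,I}`. -/
def IsComp (s t : A → V) (Zi : List A → Prop) (ω : A → List A) (N : Set A) : Prop :=
  ∃ a : A, N = {b | SameComp s t Zi ω a b}

/-- A path of the subquiver `Q_N`. -/
def PathIn (s t : A → V) (N : Set A) (p : List A) : Prop :=
  IsPath s t p ∧ ∀ x ∈ p, x ∈ N

/-- `m` is (a representative of) a maximal path of `A_N = kQ_N/I_N`
(for `N = Set.univ` this is a maximal path of `A = kQ/I`). -/
def MaxPathIn (s t : A → V) (Zi : List A → Prop) (N : Set A) (m : List A) : Prop :=
  PathIn s t N m ∧ ¬ Zi m ∧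
  (∀ α ∈ N, (∃ x ∈ m.getLast?, t x = s α) → Zi (m ++ [α])) ∧
  (∀ α ∈ N, (∃ x ∈ m.head?, t α = s x) → Zi (α :: m))

/-- `A_N` is a UMP algebra: any two non-disjoint maximal paths coincide. -/
def UMPin (s t : A → V) (Zi : List A → Prop) (N : Set A) : Prop :=
  ∀ m m' : List A, MaxPathIn s t Zi N m → MaxPathIn s t Zi N m' →
    (∃ a, a ∈ m ∧ a ∈ m') → m = m'

/-- `A = kQ/I` is special multiserial: every arrow has at most one right and at
most one left arrow-extension outside `I`. -/
def SpecialMultiserial (s t : A → V) (Zi : List A → Prop) : Prop :=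
  ∀ α β γ : A,
    ((t α = s β ∧ ¬ Zi [α, β]) → (t α = s γ ∧ ¬ Zi [α, γ]) → β = γ) ∧
    ((t β = s α ∧ ¬ Zi [β, α]) → (t γ = s α ∧ ¬ Zi [γ, α]) → β = γ)

/-- `ws = [ω_0, …, ω_n]` is the enumeration of the vertices of the component `N`
in edge order; `ω(N) = ws.flatten`. -/
def CompEnum (s t : A → V) (Zi : List A → Prop) (ω : A → List A)
    (N : Set A) (ws : List (List A)) : Prop :=
  ws ≠ [] ∧ ws.Nodup ∧ (∀ p, p ∈ ws ↔ ∃ a ∈ N, ω a = p) ∧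
  ws.Chain' (fun p q => JunctionOK s t Zi p q) ∧ IsPath s t ws.flatten

/-- `W^{(l)}`, the `l`-fold concatenation of `W`. -/
def cyclePow (W : List A) (l : ℕ) : List A := (List.replicate l W).flatten

/-- `R` is a minimal set of zero relations generating `I_N` (so `A_N` is monomial). -/
def MinGen (s t : A → V) (Zi : List A → Prop) (N : Set A) (R : Set (List A)) : Prop :=
  (∀ r ∈ R, PathIn s t N r ∧ Zi r) ∧
  (∀ p, PathIn s t N p → (Zi p ↔ ∃ r ∈ R, r <:+: p)) ∧
  (∀ r ∈ R, ∀ r' ∈ R, r <:+: r' → r = r')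

/-- `r` is a quadratic junction relation `ω_a^{l_a} ω_b^0` with `a, b ∈ (Q_N)₁`. -/
def IsJuncRel (ω : A → List A) (N : Set A) (r : List A) : Prop :=
  ∃ a ∈ N, ∃ b ∈ N, ∃ x ∈ (ω a).getLast?, ∃ y ∈ (ω b).head?, r = [x, y]

/-- `S_N = R_N \ Ω_N`. -/
def SRel (ω : A → List A) (N : Set A) (R : Set (List A)) : Set (List A) :=
  {r ∈ R | ¬ IsJuncRel ω N r}

/-- The order `≤_f` on arrows given by position along `W = ω(N)`. -/
def leF (W : List A) (α β : A) : Prop :=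
  ∃ u u' : List A, W = u ++ α :: u' ∧ β ∈ α :: u'

/-- The order `≤_s` on relations: comparison of first arrows. -/
def leS (W : List A) (u v : List A) : Prop :=
  ∃ x ∈ u.head?, ∃ y ∈ v.head?, leF W x y

/-- `ss = [s_1, …, s_k]` enumerates `S` in strictly increasing `≤_s` order. -/
def SEnum (W : List A) (S : Set (List A)) (ss : List (List A)) : Prop :=
  ss.Nodup ∧ (∀ r, r ∈ ss ↔ r ∈ S) ∧ ss.Chain' (fun u v => leS W u v ∧ u ≠ v)

/-- `m` is one of the paths `m_i`, `0 ≤ i ≤ k`, of the definition of `S_N^*`.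
Note that `ω_n^{l_n} ω_0^0 ∈ I_N` is expressed by `¬ JunctionOK s t Zi W W`. -/
def IsMi (s t : A → V) (Zi : List A → Prop) (W : List A)
    (ss : List (List A)) (m : List A) : Prop :=
  -- case `0 < i < k`
  (∃ p ∈ ss.zip ss.tail, ∃ u v v' : List A, ∃ x ∈ p.1.head?, ∃ y ∈ p.2.head?,
      W = u ++ [x] ++ v ++ [y] ++ v' ∧ m = v ++ p.2.dropLast) ∨
  -- case `i = 0`, `ω_n^{l_n} ω_0^0 ∈ I_N`
  (¬ JunctionOK s t Zi W W ∧
    ∃ s1 ∈ ss.head?, ∃ u z : List A, W = u ++ s1 ++ z ∧ m = u ++ s1.dropLast) ∨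
  -- case `i = k`, `ω_n^{l_n} ω_0^0 ∈ I_N`
  (¬ JunctionOK s t Zi W W ∧
    ∃ sk ∈ ss.getLast?, ∃ v z : List A, W = z ++ sk ++ v ∧ m = sk.tail ++ v) ∨
  -- case `i ∈ {0, k}`, `ω_n^{l_n} ω_0^0 ∉ I_N`
  (JunctionOK s t Zi W W ∧
    ∃ s1 ∈ ss.head?, ∃ sk ∈ ss.getLast?, ∃ u v z z' : List A,
      ∃ x ∈ s1.head?, ∃ y ∈ sk.head?,
      W = u ++ [x] ++ z ∧ W = z' ++ [y] ++ v ∧ m = v ++ u ++ s1.dropLast)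

/-- `r` is an `ω`-relation: a zero relation of length greater than two which is the
unique element of `I` dividing it. -/
def IsOmegaRel (s t : A → V) (Zi : List A → Prop) (r : List A) : Prop :=
  IsPath s t r ∧ Zi r ∧ 3 ≤ r.length ∧ ∀ r' : List A, Zi r' → r' <:+: r → r' = r

/-!
In the cyclic case `ω` is constant and there is a single component. Otherwise `ω_a`
is a longest path through `a` without ramifications. Two such paths sharing an arrow
run through the same unramified vertices, so by maximality of length they coincide: `b ∈ ω_a` forces `ω_a = ω_b`. Hence whenever
`t a = s b` and `ab ∉ I`, either `b` follows `a` inside `ω_a`, or `a` precedes `b`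
inside `ω_b`, or `ab` is a junction `ω_a → ω_b`; in every case `a` and `b` lie in the
same component. So each component `N` is closed under the nonzero extensions of its
arrows: a path of `Q_N` is maximal in `A_N` iff it is maximal in `A`, and a nonzero
path of `Q` lies in a single `Q_N`.
-/

def IsUnramifiedAt (s t : A → V) (v : V) : Prop :=
  (∃! b : A, s b = v) ∧ (∃! b : A, t b = v)

def IsUnramified (s t : A → V) (p : List A) : Prop :=
  IsPath s t p ∧ ∀ x ∈ p.dropLast, IsUnramifiedAt s t (t x)

def JunctionClosed (s t : A → V) (Zi : List A → Prop) (N : Set A) : Prop :=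
  ∀ x y : A, t x = s y → ¬ Zi [x, y] → (x ∈ N ↔ y ∈ N)

section Unramified

variable {s t : A → V} {p q u v u' v' l₁ l₂ : List A} {a c x y z : A}

lemma mem_phi_iff : p ∈ Phi s t a ↔ IsUnramified s t p ∧ [a] <:+: p :=
  ⟨fun h => ⟨⟨h.1, h.2.2⟩, h.2.1⟩, fun h => ⟨h.1.1, h.2, h.1.2⟩⟩

lemma IsPath.target_eq_source (hp : IsPath s t p) (h : p = l₁ ++ x :: y :: l₂) :
    t x = s y :=
  List.isChain_iff_forall_rel_of_append_cons_cons.1 hp.2 h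

lemma IsUnramified.isUnramifiedAt (hp : IsUnramified s t p) (h : p = l₁ ++ x :: y :: l₂) :
    IsUnramifiedAt s t (t x) :=
  hp.2 x <| by
    subst h
    rw [List.dropLast_append_of_ne_nil (by simp)]
    simp

lemma IsUnramified.eq_next (hp : IsUnramified s t p) (h : p = l₁ ++ x :: y :: l₂)
    (hz : t x = s z) : z = y :=
  (hp.isUnramifiedAt h).1.unique hz.symm (hp.1.target_eq_source h).symm

lemma IsUnramified.eq_prev (hp : IsUnramified s t p) (h : p = l₁ ++ x :: y :: l₂)
    (hz : t z = s y) : z = x :=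
  (hp.isUnramifiedAt h).2.unique (hz.trans (hp.1.target_eq_source h).symm) rfl

lemma IsUnramified.concat (hp : IsUnramified s t p) (hlast : p.getLast? = some x)
    (hxz : t x = s z) (hx : IsUnramifiedAt s t (t x)) : IsUnramified s t (p ++ [z]) := by
  obtain ⟨p', rfl⟩ := List.getLast?_eq_some_iff.1 hlast
  refine ⟨⟨by simp, List.isChain_append.2 ⟨hp.1.2, List.isChain_singleton z, ?_⟩⟩, ?_⟩
  · simp [hxz]
  · rw [List.dropLast_concat]
    intro y hy
    rcases List.mem_append.1 hy with hy | hy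
    · exact hp.2 y (by rwa [List.dropLast_concat])
    · rwa [List.mem_singleton.1 hy]

lemma IsUnramified.cons (hp : IsUnramified s t p) (hhead : p.head? = some x)
    (hzx : t z = s x) (hz : IsUnramifiedAt s t (t z)) : IsUnramified s t (z :: p) := by
  obtain ⟨p', rfl⟩ := List.head?_eq_some_iff.1 hhead
  refine ⟨⟨by simp, List.isChain_cons.2 ⟨by simp [hzx], hp.1.2⟩⟩, ?_⟩
  rw [List.dropLast_cons_of_ne_nil (by simp)]
  rintro y (_ | ⟨_, hy⟩)
  · exact hz
  · exact hp.2 y hy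

lemma IsUnramified.prefix_or_exists_concat (hp : IsUnramified s t p)
    (hq : IsUnramified s t q) (hP : p = u ++ c :: v) (hQ : q = u' ++ c :: v') :
    v' <+: v ∨ ∃ z, IsUnramified s t (p ++ [z]) := by
  induction v generalizing u u' v' c with
  | nil =>
    cases v' with
    | nil => exact Or.inl List.nil_prefix
    | cons z w' =>
      exact Or.inr ⟨z, hp.concat (by simp [hP]) (hq.1.target_eq_source hQ)
        (hq.isUnramifiedAt hQ)⟩
  | cons d w ih =>
    cases v' with
    | nil => exact Or.inl List.nil_prefix
    | cons d' w' =>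
      obtain rfl := hp.eq_next hP (hq.1.target_eq_source hQ)
      refine (ih (u := u ++ [c]) (u' := u' ++ [c]) (c := d') (v' := w') (by simp [hP])
        (by simp [hQ])).imp_left ?_
      exact (List.prefix_cons_inj d').2

lemma IsUnramified.suffix_or_exists_cons (hp : IsUnramified s t p)
    (hq : IsUnramified s t q) (hP : p = u ++ c :: v) (hQ : q = u' ++ c :: v') :
    u' <:+ u ∨ ∃ z, IsUnramified s t (z :: p) := by
  induction u using List.reverseRecOn generalizing u' v v' c with
  | nil =>
    rcases List.eq_nil_or_concat u' with rfl | ⟨w', z, rfl⟩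
    · exact Or.inl List.nil_suffix
    · have hQ' : q = w' ++ z :: c :: v' := by simp [hQ]
      exact Or.inr ⟨z, hp.cons (by simp [hP]) (hq.1.target_eq_source hQ')
        (hq.isUnramifiedAt hQ')⟩
  | append_singleton w e ih =>
    rcases List.eq_nil_or_concat u' with rfl | ⟨w', e', rfl⟩
    · exact Or.inl List.nil_suffix
    · have hP' : p = w ++ e :: c :: v := by simp [hP]
      have hQ' : q = w' ++ e' :: c :: v' := by simp [hQ]
      obtain rfl := hp.eq_prev hP' (hq.1.target_eq_source hQ')
      refine (ih hP' hQ').imp_left ?_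
      rintro ⟨l, rfl⟩
      exact ⟨l, by simp⟩

lemma prefix_and_suffix_of_longest_mem_phi (hp : p ∈ Phi s t a)
    (hmax : ∀ r ∈ Phi s t a, r.length ≤ p.length) (hq : IsUnramified s t q)
    (hP : p = u ++ c :: v) (hQ : q = u' ++ c :: v') : v' <+: v ∧ u' <:+ u := by
  obtain ⟨hpu, hap⟩ := mem_phi_iff.1 hp
  refine ⟨(hpu.prefix_or_exists_concat hq hP hQ).resolve_right ?_,
    (hpu.suffix_or_exists_cons hq hP hQ).resolve_right ?_⟩
  · rintro ⟨z, hz⟩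
    have := hmax _ (mem_phi_iff.2 ⟨hz, hap.trans (List.prefix_append p [z]).isInfix⟩)
    simp at this
  · rintro ⟨z, hz⟩
    have := hmax _ (mem_phi_iff.2 ⟨hz, hap.trans (List.suffix_cons z p).isInfix⟩)
    simp at this

end Unramified

section Components

variable {s t : A → V} {Zi : List A → Prop} {ω : A → List A} {N N' : Set A}
  {m : List A} {a b : A}

lemma omega_eq_of_mem (hnc : ¬ IsCyclicQuiver s t) (hω : OmegaSpec s t ω)
    (hb : b ∈ ω a) : ω a = ω b := by
  obtain ⟨hpa, hmaxa⟩ := hω.2 hnc a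
  obtain ⟨hpb, hmaxb⟩ := hω.2 hnc b
  obtain ⟨u, v, hP⟩ := List.append_of_mem hb
  obtain ⟨u', v', hQ⟩ :=
    List.append_of_mem ((mem_phi_iff.1 hpb).2.subset (List.mem_singleton_self b))
  obtain ⟨hv', hu'⟩ :=
    prefix_and_suffix_of_longest_mem_phi hpa hmaxa (mem_phi_iff.1 hpb).1 hP hQ
  obtain ⟨hv, hu⟩ :=
    prefix_and_suffix_of_longest_mem_phi hpb hmaxb (mem_phi_iff.1 hpa).1 hQ hP
  rw [hP, hQ, antisymm hv hv', antisymm hu hu']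

lemma rAdj_of_junction (hω : OmegaSpec s t ω) (hab : t a = s b) (hz : ¬ Zi [a, b]) :
    RAdj s t Zi ω a b := by
  by_cases hc : IsCyclicQuiver s t
  · obtain ⟨p, -, -, -, -, hconst⟩ := hω.1 hc
    exact Or.inl ((hconst a).trans (hconst b).symm)
  obtain ⟨hpa, ha⟩ := mem_phi_iff.1 (hω.2 hc a).1
  obtain ⟨hpb, hb⟩ := mem_phi_iff.1 (hω.2 hc b).1
  obtain ⟨u, v, hP⟩ := List.append_of_mem (ha.subset (List.mem_singleton_self a))
  obtain ⟨u', v', hQ⟩ := List.append_of_mem (hb.subset (List.mem_singleton_self b))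
  cases v with
  | cons d w =>
    obtain rfl := hpa.eq_next hP hab
    exact Or.inl (omega_eq_of_mem hc hω (by simp [hP]))
  | nil =>
    rcases List.eq_nil_or_concat u' with rfl | ⟨w', e, rfl⟩
    · by_cases heq : ω a = ω b
      · exact Or.inl heq
      · exact Or.inr (Or.inl ⟨heq, a, by simp [hP], b, by simp [hQ], hab, hz⟩)
    · have hQ' : ω b = w' ++ e :: b :: v' := by simp [hQ]
      obtain rfl := hpb.eq_prev hQ' hab
      exact Or.inl (omega_eq_of_mem hc hω (by simp [hQ'])).symm

lemma RAdj.symm (h : RAdj s t Zi ω a b) : RAdj s t Zi ω b a := by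
  rcases h with h | h | h
  · exact Or.inl h.symm
  · exact Or.inr (Or.inr h)
  · exact Or.inr (Or.inl h)

lemma junctionClosed_sameComp (hω : OmegaSpec s t ω) (c : A) :
    JunctionClosed s t Zi {b | SameComp s t Zi ω c b} := fun _ _ hxy hz =>
  have h := rAdj_of_junction hω hxy hz
  ⟨fun hx => Relation.ReflTransGen.tail hx h,
    fun hy => Relation.ReflTransGen.tail hy h.symm⟩

lemma JunctionClosed.forall_mem_of_head_mem (hN : JunctionClosed s t Zi N)
    (hZ : ZeroClosed Zi) {c : A} {rest : List A} (hp : IsPath s t (c :: rest))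
    (hnz : ¬ Zi (c :: rest)) (hc : c ∈ N) : ∀ x ∈ c :: rest, x ∈ N := by
  induction rest generalizing c with
  | nil => simpa
  | cons d w ih =>
    have hd : d ∈ N :=
      (hN c d (hp.target_eq_source (l₁ := []) rfl)
        (fun h => hnz (hZ _ _ h ⟨[], w, rfl⟩))).1 hc
    rintro x (_ | ⟨_, hx⟩)
    · exact hc
    · exact ih ⟨by simp, hp.2.tail⟩ (fun h => hnz (hZ _ _ h ⟨[c], [], by simp⟩)) hd x hx

lemma MaxPathIn.of_subset (hm : MaxPathIn s t Zi N' m) (hN : N ⊆ N')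
    (hmN : ∀ x ∈ m, x ∈ N) : MaxPathIn s t Zi N m :=
  ⟨⟨hm.1.1, hmN⟩, hm.2.1, fun α hα => hm.2.2.1 α (hN hα),
    fun α hα => hm.2.2.2 α (hN hα)⟩

lemma MaxPathIn.univ_of_junctionClosed (hm : MaxPathIn s t Zi N m) (hZ : ZeroClosed Zi)
    (hN : JunctionClosed s t Zi N) : MaxPathIn s t Zi Set.univ m := by
  refine ⟨⟨hm.1.1, fun _ _ => trivial⟩, hm.2.1, ?_, ?_⟩
  · rintro α - ⟨x, hx, hxα⟩
    by_cases hz : Zi [x, α]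
    · obtain ⟨ys, hys⟩ := List.getLast?_eq_some_iff.1 hx
      exact hZ _ _ hz ⟨ys, [], by simp [hys]⟩
    · have hxN := hm.1.2 x (List.mem_of_mem_getLast? hx)
      exact hm.2.2.1 α ((hN x α hxα hz).1 hxN) ⟨x, hx, hxα⟩
  · rintro α - ⟨x, hx, hαx⟩
    by_cases hz : Zi [α, x]
    · obtain ⟨ys, hys⟩ := List.head?_eq_some_iff.1 hx
      exact hZ _ _ hz ⟨[], ys, by simp [hys]⟩
    · have hxN := hm.1.2 x (List.mem_of_mem_head? hx)
      exact hm.2.2.2 α ((hN α x hαx hz).2 hxN) ⟨x, hx, hαx⟩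

end Components

theorem stmt_6_general (s t : A → V) (Zi : List A → Prop)
    (ω : A → List A) (hω : OmegaSpec s t ω)
    (hZ : ZeroClosed Zi) :
    ∀ m : List A, MaxPathIn s t Zi Set.univ m ↔
      ∃ N : Set A, IsComp s t Zi ω N ∧ MaxPathIn s t Zi N m := by
  intro m
  constructor
  · intro hm
    obtain ⟨c, rest, rfl⟩ := List.exists_cons_of_ne_nil hm.1.1.1
    have hN := junctionClosed_sameComp (Zi := Zi) hω c
    exact ⟨_, ⟨c, rfl⟩, hm.of_subset (Set.subset_univ _)
      (hN.forall_mem_of_head_mem hZ hm.1.1 hm.2.1 Relation.ReflTransGen.refl)⟩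
  · rintro ⟨N, ⟨c, rfl⟩, hm⟩
    exact hm.univ_of_junctionClosed hZ (junctionClosed_sameComp hω c)

/-- the maximal paths of `A = kQ/I` are exactly the maximal paths of
the component algebras `A_N = kQ_N/I_N`, over all weakly connected components `N`
of `G_{Q,I}`. -/
theorem stmt_6 [Fintype V] [Fintype A] (s t : A → V) (Zi : List A → Prop)
    (ω : A → List A) (hω : OmegaSpec s t ω)
    (hZ : ZeroClosed Zi) (hadm : Admissible s t Zi) :
    ∀ m : List A, MaxPathIn s t Zi Set.univ m ↔
      ∃ N : Set A, IsComp s t Zi ω N ∧ MaxPathIn s t Zi N m :=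
  stmt_6_general s t Zi ω hω hZ

end UMPPaper
end

section
/- Let A = kQ/I be a special multiserial algebra and N a weakly connected component of G_{Q,I} with associated repetition-free path ω(N). Define on the arrows of Q_N the relation α ≤_f β iff ω(N) = u α u' for some paths u, u' with β a subpath of α u'. Then ≤_f is a total order on the arrow set of Q_N. -/
namespace UMPPaper

variable {V A : Type}

/-! In a cyclic quiver `ω` is constant and repetition free by definition. Otherwise `ω_a` is a
longest path through `a` whose interior vertices have a single incoming and a single outgoing
arrow. Two such paths through a common arrow must continue alike, forwards and (reversing the
quiver) backwards, as far as both go; maximality then forces them to be equal, and applied to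
two occurrences of one arrow in a single path it forbids repetitions. So the `ω_a` are
repetition free and pairwise disjoint, `ω(N)` is repetition free and contains every arrow of
`Q_N`, and `≤_f` is the order of positions along it. -/

theorem rel_of_eq_append_cons_cons {R : A → A → Prop} {l u v : List A} {x y : A}
    (hl : l.IsChain R) (h : l = u ++ x :: y :: v) : R x y :=
  (hl.infix (l₁ := [x, y]) ⟨u, v, by simp [h]⟩).rel

theorem mem_dropLast_of_eq_append_cons_cons {l u v : List A} {x y : A}
    (h : l = u ++ x :: y :: v) : x ∈ l.dropLast := by
  simp [h, List.dropLast_append_of_ne_nil]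

theorem exists_eq_append_cons_cons_of_mem_tail {l : List A} {x : A} (h : x ∈ l.tail) :
    ∃ u y v, l = u ++ y :: x :: v := by
  obtain _ | ⟨z, l⟩ := l
  · simp at h
  obtain ⟨w, v, rfl⟩ := List.append_of_mem h
  obtain ⟨u, y, hzw⟩ : ∃ u y, z :: w = u ++ [y] :=
    ⟨_, _, (List.dropLast_append_getLast (List.cons_ne_nil z w)).symm⟩
  exact ⟨u, y, v, by rw [← List.cons_append, hzw, List.append_assoc, List.singleton_append]⟩

theorem exists_eq_append_cons_append_cons_of_not_nodup {l : List A} (h : ¬ l.Nodup) :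
    ∃ (x : A) (u v v' : List A), l = u ++ x :: (v ++ x :: v') := by
  induction l with
  | nil => simp at h
  | cons a l ih =>
    rw [List.nodup_cons, not_and_or, not_not] at h
    rcases h with ha | hl
    · obtain ⟨v, v', rfl⟩ := List.append_of_mem ha
      exact ⟨a, [], v, v', rfl⟩
    · obtain ⟨x, u, v, v', rfl⟩ := ih hl
      exact ⟨x, a :: u, v, v', rfl⟩

section Phi

variable {s t : A → V}

theorem prefix_or_prefix_of_mem_Phi {a c : A} {p q u u' v v' : List A}
    (hp : p ∈ Phi s t a) (hq : IsPath s t q)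
    (hpe : p = u ++ c :: u') (hqe : q = v ++ c :: v') : u' <+: v' ∨ v' <+: u' := by
  induction u' generalizing u c v v' with
  | nil => exact Or.inl List.nil_prefix
  | cons e u' ih =>
    obtain _ | ⟨f, v'⟩ := v'
    · exact Or.inr List.nil_prefix
    obtain ⟨b, -, hb⟩ := (hp.2.2 c (mem_dropLast_of_eq_append_cons_cons hpe)).1
    have hef : e = f :=
      (hb e (rel_of_eq_append_cons_cons hp.1.2 hpe).symm).trans
        (hb f (rel_of_eq_append_cons_cons hq.2 hqe).symm).symm
    subst hef
    simpa [List.cons_prefix_cons] using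
      ih (c := e) (u := u ++ [c]) (v := v ++ [c]) (by simp [hpe]) (by simp [hqe])

theorem append_mem_Phi {a c d : A} {p q u u' v w : List A}
    (hp : p ∈ Phi s t a) (hq : q ∈ Phi s t c)
    (hpe : p = u ++ d :: u') (hqe : q = v ++ d :: (u' ++ w)) (hw : w ≠ []) :
    p ++ w ∈ Phi s t a := by
  obtain ⟨⟨-, hpch⟩, hpa, hpint⟩ := hp
  obtain ⟨⟨-, hqch⟩, -, hqint⟩ := hq
  have hq' : q = (v ++ d :: u') ++ w := by simp [hqe]
  have hqsplit := List.isChain_append.mp (hq' ▸ hqch)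
  refine ⟨⟨by simp [hpe], List.isChain_append.mpr ⟨hpch, hqsplit.2.1, ?_⟩⟩,
    hpa.trans (List.prefix_append p w).isInfix, ?_⟩
  · simpa [hpe, List.getLast?_append] using hqsplit.2.2
  · intro x hx
    rw [List.dropLast_append_of_ne_nil hw, hpe, List.append_assoc, List.mem_append] at hx
    rcases hx with hx | hx
    · exact hpint x (by simp [hpe, List.dropLast_append_of_ne_nil, hx])
    · apply hqint x
      rw [hq', List.dropLast_append_of_ne_nil hw, List.append_assoc]
      exact List.mem_append_right v hx

theorem reverse_mem_Phi {a : A} {p : List A} (hp : p ∈ Phi s t a) :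
    p.reverse ∈ Phi t s a := by
  obtain ⟨⟨hpne, hpch⟩, hpa, hpint⟩ := hp
  refine ⟨⟨by simpa using hpne, List.isChain_reverse.mpr (hpch.imp fun _ _ h => h.symm)⟩,
    List.reverse_infix.mpr hpa, fun x hx => ?_⟩
  rw [List.dropLast_reverse, List.mem_reverse] at hx
  obtain ⟨u, y, v, hpe⟩ := exists_eq_append_cons_cons_of_mem_tail hx
  rw [← rel_of_eq_append_cons_cons hpch hpe]
  exact (hpint y (mem_dropLast_of_eq_append_cons_cons hpe)).symm

end Phi

/-- The paths `ω_a` of a non-cyclic quiver. -/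
def IsMaxPhi (s t : A → V) (a : A) (p : List A) : Prop :=
  p ∈ Phi s t a ∧ ∀ q ∈ Phi s t a, q.length ≤ p.length

namespace IsMaxPhi

variable {s t : A → V} {a b c : A} {p q u u' v v' : List A}

theorem reverse (hp : IsMaxPhi s t a p) : IsMaxPhi t s a p.reverse :=
  ⟨reverse_mem_Phi hp.1, fun q hq => by simpa using hp.2 _ (reverse_mem_Phi hq)⟩

theorem eq_of_prefix (hp : IsMaxPhi s t a p) (hq : q ∈ Phi s t b)
    (hpe : p = u ++ c :: u') (hqe : q = v ++ c :: v') (h : u' <+: v') : u' = v' := by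
  obtain ⟨w, rfl⟩ := h
  by_contra hw
  -- otherwise `p` could be extended along `q`
  have hlen := hp.2 _ (append_mem_Phi hp.1 hq hpe hqe (by simpa using hw))
  simp_all

theorem suffix_eq (hp : IsMaxPhi s t a p) (hq : IsMaxPhi s t b q)
    (hpe : p = u ++ c :: u') (hqe : q = v ++ c :: v') : u' = v' := by
  rcases prefix_or_prefix_of_mem_Phi hp.1 hq.1.1 hpe hqe with h | h
  · exact hp.eq_of_prefix hq.1 hpe hqe h
  · exact (hq.eq_of_prefix hp.1 hqe hpe h).symm

theorem prefix_eq (hp : IsMaxPhi s t a p) (hq : IsMaxPhi s t b q)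
    (hpe : p = u ++ c :: u') (hqe : q = v ++ c :: v') : u = v :=
  List.reverse_inj.mp <| hp.reverse.suffix_eq hq.reverse
    (c := c) (u := u'.reverse) (v := v'.reverse) (by simp [hpe]) (by simp [hqe])

theorem nodup (hp : IsMaxPhi s t a p) : p.Nodup := by
  by_contra hnd
  obtain ⟨x, u, v, v', hpe⟩ := exists_eq_append_cons_append_cons_of_not_nodup hnd
  have hlen := congrArg List.length <|
    hp.suffix_eq hp (c := x) (v := u ++ x :: v) (v' := v') hpe (by simp [hpe])
  simp only [List.length_append, List.length_cons] at hlen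
  omega

theorem eq_of_mem_of_mem (hp : IsMaxPhi s t a p) (hq : IsMaxPhi s t b q)
    (hcp : c ∈ p) (hcq : c ∈ q) : p = q := by
  obtain ⟨u, u', hpe⟩ := List.append_of_mem hcp
  obtain ⟨v, v', hqe⟩ := List.append_of_mem hcq
  rw [hpe, hqe, hp.prefix_eq hq hpe hqe, hp.suffix_eq hq hpe hqe]

end IsMaxPhi

namespace OmegaSpec

variable {s t : A → V} {ω : A → List A}

theorem mem_self (hω : OmegaSpec s t ω) (a : A) : a ∈ ω a := by
  by_cases hcyc : IsCyclicQuiver s t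
  · obtain ⟨p, -, -, hall, -, hωp⟩ := hω.1 hcyc
    exact hωp a ▸ hall a
  · exact (List.singleton_infix_iff a _).mp (hω.2 hcyc a).1.2.1

theorem nodup (hω : OmegaSpec s t ω) (a : A) : (ω a).Nodup := by
  by_cases hcyc : IsCyclicQuiver s t
  · obtain ⟨p, -, hnd, -, -, hωp⟩ := hω.1 hcyc
    exact hωp a ▸ hnd
  · exact IsMaxPhi.nodup (hω.2 hcyc a)

theorem eq_of_mem_of_mem (hω : OmegaSpec s t ω) {a b c : A} (ha : c ∈ ω a) (hb : c ∈ ω b) :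
    ω a = ω b := by
  by_cases hcyc : IsCyclicQuiver s t
  · obtain ⟨p, -, -, -, -, hωp⟩ := hω.1 hcyc
    rw [hωp a, hωp b]
  · exact IsMaxPhi.eq_of_mem_of_mem (hω.2 hcyc a) (hω.2 hcyc b) ha hb

end OmegaSpec

namespace CompEnum

variable {s t : A → V} {Zi : List A → Prop} {ω : A → List A} {N : Set A} {ws : List (List A)}

theorem nodup_flatten (hws : CompEnum s t Zi ω N ws) (hω : OmegaSpec s t ω) :
    ws.flatten.Nodup := by
  obtain ⟨-, hwsnd, hwsmem, -, -⟩ := hws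
  refine List.nodup_flatten.mpr ⟨fun l hl => ?_, hwsnd.imp_of_mem fun hl₁ hl₂ hne x hx₁ hx₂ => ?_⟩
  · obtain ⟨a, -, rfl⟩ := (hwsmem l).1 hl
    exact hω.nodup a
  · obtain ⟨a, -, rfl⟩ := (hwsmem _).1 hl₁
    obtain ⟨b, -, rfl⟩ := (hwsmem _).1 hl₂
    exact hne (hω.eq_of_mem_of_mem hx₁ hx₂)

theorem mem_flatten (hws : CompEnum s t Zi ω N ws) (hω : OmegaSpec s t ω) {a : A}
    (ha : a ∈ N) : a ∈ ws.flatten :=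
  List.mem_flatten.mpr ⟨ω a, (hws.2.2.1 _).2 ⟨a, ha, rfl⟩, hω.mem_self a⟩

end CompEnum

section leF

variable {W : List A} {x y z : A}

theorem leF_of_idxOf_le [DecidableEq A] (hx : x ∈ W) (hy : y ∈ W)
    (h : W.idxOf x ≤ W.idxOf y) : leF W x y := by
  have hxW := List.idxOf_lt_length_iff.mpr hx
  have hyW := List.idxOf_lt_length_iff.mpr hy
  have hdrop : W.drop (W.idxOf x) = x :: W.drop (W.idxOf x + 1) := by
    rw [List.drop_eq_getElem_cons hxW, List.getElem_idxOf hxW]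
  refine ⟨W.take (W.idxOf x), W.drop (W.idxOf x + 1), by rw [← hdrop, List.take_append_drop], ?_⟩
  rw [← hdrop, List.mem_drop_iff_getElem]
  exact ⟨W.idxOf y - W.idxOf x, by omega, by
    simp only [Nat.add_sub_cancel' h, List.getElem_idxOf hyW]⟩

theorem leF_iff_idxOf_le [DecidableEq A] (hW : W.Nodup) :
    leF W x y ↔ x ∈ W ∧ y ∈ W ∧ W.idxOf x ≤ W.idxOf y := by
  refine ⟨?_, fun ⟨hx, hy, h⟩ => leF_of_idxOf_le hx hy h⟩
  rintro ⟨u, u', rfl, hy⟩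
  have hdisj := List.disjoint_of_nodup_append hW
  have hxu : x ∉ u := fun hm => hdisj hm List.mem_cons_self
  have hyu : y ∉ u := fun hm => hdisj hm hy
  refine ⟨by simp, List.mem_append_right _ hy, ?_⟩
  rw [List.idxOf_append_of_notMem hxu, List.idxOf_append_of_notMem hyu, List.idxOf_cons_self]
  omega

theorem leF_refl (hx : x ∈ W) : leF W x x :=
  let ⟨u, u', hW⟩ := List.append_of_mem hx
  ⟨u, u', hW, List.mem_cons_self⟩

theorem leF_antisymm (hW : W.Nodup) (hxy : leF W x y) (hyx : leF W y x) : x = y := by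
  classical
  rw [leF_iff_idxOf_le hW] at hxy hyx
  exact (List.idxOf_inj hxy.1).mp (le_antisymm hxy.2.2 hyx.2.2)

theorem leF_trans (hW : W.Nodup) (hxy : leF W x y) (hyz : leF W y z) : leF W x z := by
  classical
  rw [leF_iff_idxOf_le hW] at hxy hyz ⊢
  exact ⟨hxy.1, hyz.2.1, hxy.2.2.trans hyz.2.2⟩

theorem leF_total (hx : x ∈ W) (hy : y ∈ W) : leF W x y ∨ leF W y x := by
  classical
  exact (le_total _ _).imp (leF_of_idxOf_le hx hy) (leF_of_idxOf_le hy hx)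

end leF

theorem stmt_11_general (s t : A → V) (Zi : List A → Prop)
    (ω : A → List A) (hω : OmegaSpec s t ω)
    (N : Set A)
    (ws : List (List A)) (hws : CompEnum s t Zi ω N ws) :
    (∀ a ∈ N, leF ws.flatten a a) ∧
    (∀ a ∈ N, ∀ b ∈ N, leF ws.flatten a b → leF ws.flatten b a → a = b) ∧
    (∀ a ∈ N, ∀ b ∈ N, ∀ c ∈ N,
      leF ws.flatten a b → leF ws.flatten b c → leF ws.flatten a c) ∧
    (∀ a ∈ N, ∀ b ∈ N, leF ws.flatten a b ∨ leF ws.flatten b a) := by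
  have hnd := hws.nodup_flatten hω
  have hmem : ∀ a ∈ N, a ∈ ws.flatten := fun _ ha => hws.mem_flatten hω ha
  exact ⟨fun a ha => leF_refl (hmem a ha), fun _ _ _ _ => leF_antisymm hnd,
    fun _ _ _ _ _ _ => leF_trans hnd, fun a ha b hb => leF_total (hmem a ha) (hmem b hb)⟩

/-- for a special multiserial algebra and a component `N`, the relation
`≤_f` (position along the repetition-free path `ω(N)`) is a total order on the arrows
of `Q_N`. -/
theorem stmt_11 [Fintype V] [Fintype A] (s t : A → V) (Zi : List A → Prop)
    (ω : A → List A) (hω : OmegaSpec s t ω)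
    (hZ : ZeroClosed Zi) (hadm : Admissible s t Zi)
    (hsm : SpecialMultiserial s t Zi)
    (N : Set A) (hN : IsComp s t Zi ω N)
    (ws : List (List A)) (hws : CompEnum s t Zi ω N ws) :
    (∀ a ∈ N, leF ws.flatten a a) ∧
    (∀ a ∈ N, ∀ b ∈ N, leF ws.flatten a b → leF ws.flatten b a → a = b) ∧
    (∀ a ∈ N, ∀ b ∈ N, ∀ c ∈ N,
      leF ws.flatten a b → leF ws.flatten b c → leF ws.flatten a c) ∧
    (∀ a ∈ N, ∀ b ∈ N, leF ws.flatten a b ∨ leF ws.flatten b a) :=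
  stmt_11_general s t Zi ω hω N ws hws

end UMPPaper
end
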